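/- Let R be a semilocal Prüfer domain (a Prüfer domain with only finitely many maximal ideals). Then every stable semistar operation ⋆ on R equals its normalized stable version ⋆̃. -/

import Mathlib

open Pointwise

section Defs

variable {R : Type*} (K : Type*) [CommRing R] [IsDomain R] [Field K] [Algebra R K]
  [IsFractionRing R K]

/-- A function `f` on the `R`-submodules of the quotient field `K` is a semistar operation if it
is extensive, idempotent, monotone and commutes with scaling by elements of `K`. -/
def IsSemistarOperation (f : Submodule R K → Submodule R K) : Prop :=
  (∀ I : Submodule R K, I ≤ f I) ∧
  (∀ I : Submodule R K, f (f I) = f I) ∧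
  (∀ I J : Submodule R K, I ≤ J → f I ≤ f J) ∧
  (∀ (x : K) (I : Submodule R K), f (x • I) = x • f I)

/-- A semistar operation is stable if it distributes over finite intersections. -/
def IsStableOperation (f : Submodule R K → Submodule R K) : Prop :=
  ∀ I J : Submodule R K, f (I ⊓ J) = f I ⊓ f J

/-- An ideal of `R`, viewed as an `R`-submodule of the quotient field `K`. -/
def idealToK (I : Ideal R) : Submodule R K :=
  Submodule.map (Algebra.linearMap R K) I

/-- A Prüfer domain is an integral domain in which every nonzero finitely generated ideal is
invertible (as a fractional ideal, i.e. as a submodule of the quotient field). -/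
def IsPruferDomain : Prop :=
  ∀ I : Ideal R, I ≠ ⊥ → I.FG → ∃ J : Submodule R K, idealToK K I * J = 1

/-- The localization `R_P` of `R` at the prime `P`, viewed as an `R`-submodule of the quotient
field `K`. -/
noncomputable def locSub (P : Ideal R) (hP : P.IsPrime) : Submodule R K :=
  haveI := hP
  Subalgebra.toSubmodule
    (Localization.subalgebra K P.primeCompl
      (fun x hx => mem_nonZeroDivisors_of_ne_zero (fun h0 => hx (h0 ▸ P.zero_mem))))

/-- The `v`-operation of the valuation ring `R_P`, applied to the `R_P`-submodule of `K`
generated by (the image of) `I`: it sends `I` to `(R_P : (R_P : IR_P))`. -/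
noncomputable def vOp (P : Ideal R) (hP : P.IsPrime) (I : Submodule R K) : Submodule R K :=
  locSub K P hP / (locSub K P hP / (I * locSub K P hP))

/-- The quasi-spectrum of a (stable) semistar operation: the set of primes `P` such that
`P^⋆ ∩ R = P`. -/
def QSpec (f : Submodule R K → Submodule R K) : Set (Ideal R) :=
  {P | P.IsPrime ∧ f (idealToK K P) ⊓ 1 = idealToK K P}

/-- The pseudo-spectrum of a stable semistar operation: the set of primes `P` such that
`P^⋆ ∩ R = R` and `L^⋆ ∩ R = L` for some `P`-primary ideal `L`. -/
def PsSpec (f : Submodule R K → Submodule R K) : Set (Ideal R) :=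
  {P | P.IsPrime ∧ f (idealToK K P) ⊓ 1 = 1 ∧
    ∃ L : Ideal R, L.IsPrimary ∧ L.radical = P ∧ f (idealToK K L) ⊓ 1 = idealToK K L}

/-- The normalized stable version of a stable semistar operation `f`:
`I ↦ ⋂ {IR_P : P ∈ QSpec} ∩ ⋂ {(IR_P)^{v_{R_P}} : P ∈ PsSpec}`. -/
noncomputable def normStable (f : Submodule R K → Submodule R K) (I : Submodule R K) :
    Submodule R K :=
  (⨅ P : QSpec K f, I * locSub K P.1 P.2.1) ⊓
    ⨅ P : PsSpec K f, vOp K P.1 P.2.1 I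

end Defs
section Helpers

open Submodule

variable {R K : Type*} [CommRing R] [IsDomain R] [Field K] [Algebra R K] [IsFractionRing R K]

lemma algK_inj : Function.Injective (algebraMap R K) := IsFractionRing.injective R K

lemma mem_locSub {P : Ideal R} (hP : P.IsPrime) {z : K} :
    z ∈ locSub K P hP ↔ ∃ r s : R, s ∉ P ∧ algebraMap R K s * z = algebraMap R K r := by
  have : z ∈ locSub K P hP ↔ z ∈ {x : K | ∃ (a s : R) (hs : s ∈ P.primeCompl),
      x = IsLocalization.mk' K a (⟨s, mem_nonZeroDivisors_of_ne_zero
        (fun h0 => hs (h0 ▸ P.zero_mem))⟩ : nonZeroDivisors R)} := Iff.rfl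
  rw [this]
  constructor
  · rintro ⟨r, s, hs, rfl⟩
    refine ⟨r, s, hs, ?_⟩
    rw [mul_comm]
    exact IsLocalization.mk'_spec K r _
  · rintro ⟨r, s, hs, h⟩
    exact ⟨r, s, hs, by rw [IsLocalization.eq_mk'_iff_mul_eq]; rw [mul_comm] at h; exact h⟩

end Helpers
section Helpers2

open Submodule

variable {R K : Type*} [CommRing R] [IsDomain R] [Field K] [Algebra R K] [IsFractionRing R K]

lemma algebraMap_mem_locSub {P : Ideal R} (hP : P.IsPrime) (r : R) :
    algebraMap R K r ∈ locSub K P hP :=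
  (mem_locSub hP).mpr ⟨r, 1, fun h => hP.ne_top (P.eq_top_of_isUnit_mem h isUnit_one),
    by rw [map_one, one_mul]⟩

lemma one_mem_locSub {P : Ideal R} (hP : P.IsPrime) : (1 : K) ∈ locSub K P hP := by
  simpa using algebraMap_mem_locSub (K := K) hP 1

lemma one_le_locSub {P : Ideal R} (hP : P.IsPrime) : (1 : Submodule R K) ≤ locSub K P hP := by
  intro z hz
  obtain ⟨r, rfl⟩ := Submodule.mem_one.mp hz
  exact algebraMap_mem_locSub hP r

lemma algK_ne_zero {s : R} (hs : s ≠ 0) : algebraMap R K s ≠ 0 := by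
  rw [Ne, map_eq_zero_iff _ algK_inj]; exact hs

lemma ne_zero_of_notMem {P : Ideal R} {s : R} (hs : s ∉ P) : s ≠ 0 :=
  fun h => hs (h ▸ P.zero_mem)

lemma inv_mem_locSub {P : Ideal R} (hP : P.IsPrime) {s : R} (hs : s ∉ P) :
    (algebraMap R K s)⁻¹ ∈ locSub K P hP := by
  refine (mem_locSub hP).mpr ⟨1, s, hs, ?_⟩
  rw [mul_inv_cancel₀ (algK_ne_zero (ne_zero_of_notMem hs)), map_one]

lemma locSub_mul_self {P : Ideal R} (hP : P.IsPrime) :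
    locSub K P hP * locSub K P hP = locSub K P hP := by
  apply le_antisymm
  · refine Submodule.mul_le.mpr fun m hm n hn => ?_
    obtain ⟨r, s, hs, h1⟩ := (mem_locSub hP).mp hm
    obtain ⟨r', s', hs', h2⟩ := (mem_locSub hP).mp hn
    refine (mem_locSub hP).mpr ⟨r * r', s * s', fun h => ?_, ?_⟩
    · rcases hP.mem_or_mem h with h | h
      exacts [hs h, hs' h]
    · rw [map_mul, map_mul, ← h1, ← h2]; ring
  · intro z hz
    simpa using Submodule.mul_mem_mul hz (one_mem_locSub hP)

lemma locSub_mono {P M : Ideal R} (hP : P.IsPrime) (hM : M.IsMaximal) (h : P ≤ M) :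
    locSub K M hM.isPrime ≤ locSub K P hP := by
  intro z hz
  obtain ⟨r, s, hs, h1⟩ := (mem_locSub hM.isPrime).mp hz
  exact (mem_locSub hP).mpr ⟨r, s, fun hc => hs (h hc), h1⟩

lemma mem_mul_locSub {P : Ideal R} (hP : P.IsPrime) {I : Submodule R K} {z : K} :
    z ∈ I * locSub K P hP ↔ ∃ s : R, s ∉ P ∧ s • z ∈ I := by
  constructor
  · intro hz
    refine Submodule.mul_induction_on hz ?_ ?_
    · intro m hm u hu
      obtain ⟨r, s, hs, hsu⟩ := (mem_locSub hP).mp hu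
      refine ⟨s, hs, ?_⟩
      have : s • (m * u) = r • m := by
        rw [Algebra.smul_def, Algebra.smul_def, ← mul_assoc, mul_comm (algebraMap R K s) m,
          mul_assoc, hsu, mul_comm]
      rw [this]
      exact I.smul_mem r hm
    · rintro x y ⟨s, hs, hx⟩ ⟨t, ht, hy⟩
      refine ⟨s * t, fun hmem => ?_, ?_⟩
      · rcases hP.mem_or_mem hmem with h | h
        exacts [hs h, ht h]
      · have : (s * t) • (x + y) = t • (s • x) + s • (t • y) := by
          simp only [smul_add, smul_smul]; rw [mul_comm t s]
        rw [this]
        exact I.add_mem (I.smul_mem t hx) (I.smul_mem s hy)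
  · rintro ⟨s, hs, h⟩
    have hz : z = (s • z) * (algebraMap R K s)⁻¹ := by
      rw [Algebra.smul_def, mul_comm (algebraMap R K s) z, mul_assoc,
        mul_inv_cancel₀ (algK_ne_zero (ne_zero_of_notMem hs)), mul_one]
    rw [hz]
    exact Submodule.mul_mem_mul h (inv_mem_locSub hP hs)

lemma mem_idealToK {I : Ideal R} {z : K} :
    z ∈ idealToK K I ↔ ∃ a ∈ I, algebraMap R K a = z := by
  simp [idealToK, Submodule.mem_map, Algebra.linearMap_apply]

lemma idealToK_le_one (I : Ideal R) : idealToK (R := R) K I ≤ 1 := by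
  intro z hz
  obtain ⟨a, _, rfl⟩ := mem_idealToK.mp hz
  exact Submodule.mem_one.mpr ⟨a, rfl⟩

lemma idealToK_idealOf {C : Submodule R K} (h : C ≤ 1) :
    idealToK K (Submodule.comap (Algebra.linearMap R K) C : Ideal R) = C := by
  apply le_antisymm
  · intro z hz
    obtain ⟨a, ha, rfl⟩ := mem_idealToK.mp hz
    exact ha
  · intro z hz
    obtain ⟨r, rfl⟩ := Submodule.mem_one.mp (h hz)
    exact mem_idealToK.mpr ⟨r, by simpa [Algebra.linearMap_apply] using hz, rfl⟩

lemma mem_smul_iff {x z : K} (hx : x ≠ 0) {I : Submodule R K} :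
    z ∈ x • I ↔ x⁻¹ * z ∈ I := by
  rw [← SetLike.mem_coe, Submodule.coe_pointwise_smul, Set.mem_smul_set]
  constructor
  · rintro ⟨y, hy, rfl⟩
    rwa [smul_eq_mul, ← mul_assoc, inv_mul_cancel₀ hx, one_mul]
  · intro hy
    exact ⟨x⁻¹ * z, hy, by rw [smul_eq_mul, ← mul_assoc, mul_inv_cancel₀ hx, one_mul]⟩

end Helpers2
section Helpers3

open Submodule

variable {R K : Type*} [CommRing R] [IsDomain R] [Field K] [Algebra R K] [IsFractionRing R K]

lemma valuation_locSub (hR : IsPruferDomain (R := R) K) {P : Ideal R} (hP : P.IsPrime) :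
    ∀ z : K, z ≠ 0 → z ∈ locSub K P hP ∨ z⁻¹ ∈ locSub K P hP := by
  intro z hz
  obtain ⟨a, b, hb0, rfl⟩ := IsFractionRing.div_surjective (A := R) z
  have hbne : algebraMap R K b ≠ 0 :=
    IsFractionRing.to_map_ne_zero_of_mem_nonZeroDivisors hb0
  have hane : algebraMap R K a ≠ 0 := by
    intro h; apply hz; rw [h, zero_div]
  have ha0 : a ≠ 0 := fun h => hane (by rw [h, map_zero])
  set I0 : Ideal R := Ideal.span {a, b} with hI0
  have haI : a ∈ I0 := Ideal.subset_span (by simp)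
  have hbI : b ∈ I0 := Ideal.subset_span (by simp)
  have hI0ne : I0 ≠ ⊥ := by
    intro h
    apply ha0
    have := haI
    rw [h] at this
    simpa using this
  have hI0fg : I0.FG := by
    classical
    exact ⟨{a, b}, by simp only [Finset.coe_insert, Finset.coe_singleton]; exact hI0.symm⟩
  obtain ⟨J, hJ⟩ := hR I0 hI0ne hI0fg
  have h1 : (1 : K) ∈ idealToK K I0 * J := by
    rw [hJ]; exact Submodule.mem_one.mpr ⟨1, map_one _⟩
  have key : ∀ w : K, w ∈ idealToK K I0 * J →
      ∃ u v : K, w = algebraMap R K a * u + algebraMap R K b * v ∧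
      algebraMap R K a * u ∈ (1 : Submodule R K) ∧ algebraMap R K b * v ∈ (1 : Submodule R K) ∧
      algebraMap R K a * v ∈ (1 : Submodule R K) ∧ algebraMap R K b * u ∈ (1 : Submodule R K) := by
    intro w hw
    refine Submodule.mul_induction_on hw ?_ ?_
    · intro m hm n hn
      obtain ⟨c, hc, rfl⟩ := mem_idealToK.mp hm
      obtain ⟨xx, yy, hxy⟩ := Ideal.mem_span_pair.mp (hI0 ▸ hc)
      have mem : ∀ d : R, d ∈ I0 → ∀ w' : R, algebraMap R K (w' * d) * n ∈ (1 : Submodule R K) := by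
        intro d hd w'
        rw [← hJ]
        exact Submodule.mul_mem_mul (mem_idealToK.mpr ⟨w' * d, Ideal.mul_mem_left _ _ hd, rfl⟩) hn
      refine ⟨algebraMap R K xx * n, algebraMap R K yy * n, ?_, ?_, ?_, ?_, ?_⟩
      · rw [← hxy, map_add, map_mul, map_mul]; ring
      · have := mem a haI xx; rw [map_mul] at this
        have e : algebraMap R K a * (algebraMap R K xx * n)
            = algebraMap R K xx * algebraMap R K a * n := by ring
        rw [e]; exact this
      · have := mem b hbI yy; rw [map_mul] at this
        have e : algebraMap R K b * (algebraMap R K yy * n)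
            = algebraMap R K yy * algebraMap R K b * n := by ring
        rw [e]; exact this
      · have := mem a haI yy; rw [map_mul] at this
        have e : algebraMap R K a * (algebraMap R K yy * n)
            = algebraMap R K yy * algebraMap R K a * n := by ring
        rw [e]; exact this
      · have := mem b hbI xx; rw [map_mul] at this
        have e : algebraMap R K b * (algebraMap R K xx * n)
            = algebraMap R K xx * algebraMap R K b * n := by ring
        rw [e]; exact this
    · rintro x y ⟨u1, v1, e1, m1, m2, m3, m4⟩ ⟨u2, v2, e2, n1, n2, n3, n4⟩
      refine ⟨u1 + u2, v1 + v2, by rw [e1, e2]; ring, ?_, ?_, ?_, ?_⟩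
      · rw [mul_add]; exact Submodule.add_mem _ m1 n1
      · rw [mul_add]; exact Submodule.add_mem _ m2 n2
      · rw [mul_add]; exact Submodule.add_mem _ m3 n3
      · rw [mul_add]; exact Submodule.add_mem _ m4 n4
  obtain ⟨u, v, heq, m1, m2, m3, m4⟩ := key 1 h1
  obtain ⟨e, he⟩ := Submodule.mem_one.mp m1
  obtain ⟨g, hg⟩ := Submodule.mem_one.mp m2
  obtain ⟨h', hh⟩ := Submodule.mem_one.mp m3
  obtain ⟨l, hl⟩ := Submodule.mem_one.mp m4
  have heg : e + g = 1 := by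
    apply algK_inj (K := K)
    rw [map_one, RingHom.map_add, he, hg, ← heq]
  by_cases hcase : e ∈ P
  · have hgP : g ∉ P := by
      intro hgp
      exact hP.ne_top (P.eq_top_of_isUnit_mem (by rw [← heg]; exact P.add_mem hcase hgp) isUnit_one)
  -- z ∈ locSub
    left
    refine (mem_locSub hP).mpr ⟨h', g, hgP, ?_⟩
    rw [hg, hh]
    field_simp
  · right
    rw [inv_div]
    refine (mem_locSub hP).mpr ⟨l, e, hcase, ?_⟩
    rw [he, hl]
    field_simp

lemma submodule_comparable {V : Submodule R K}
    (hval : ∀ z : K, z ≠ 0 → z ∈ V ∨ z⁻¹ ∈ V) {S T : Submodule R K}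
    (hS : S * V ≤ S) (hT : T * V ≤ T) : S ≤ T ∨ T ≤ S := by
  by_cases h : S ≤ T
  · exact Or.inl h
  · right
    rw [SetLike.not_le_iff_exists] at h
    obtain ⟨s, hsS, hsT⟩ := h
    have hs0 : s ≠ 0 := fun h0 => hsT (h0 ▸ T.zero_mem)
    intro t htT
    by_cases ht0 : t = 0
    · exact ht0 ▸ S.zero_mem
    rcases hval (t / s) (div_ne_zero ht0 hs0) with h | h
    · have e : t = s * (t / s) := by field_simp
      rw [e]; exact hS (Submodule.mul_mem_mul hsS h)
    · rw [inv_div] at h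
      exfalso; apply hsT
      have e : s = t * (s / t) := by field_simp
      rw [e]; exact hT (Submodule.mul_mem_mul htT h)

end Helpers3
section Helpers4

open Submodule

variable {R K : Type*} [CommRing R] [IsDomain R] [Field K] [Algebra R K] [IsFractionRing R K]
variable {f : Submodule R K → Submodule R K}

lemma one_mem_f_one (hf : IsSemistarOperation K f) : (1:K) ∈ f 1 :=
  hf.1 1 (Submodule.mem_one.mpr ⟨1, map_one _⟩)

lemma one_mem_f_top (hf : IsSemistarOperation K f) : (1:K) ∈ f ⊤ :=
  hf.1 ⊤ trivial

lemma lemA (hf : IsSemistarOperation K f) (hst : IsStableOperation K f)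
    {x : K} (hx : x ≠ 0) {I : Submodule R K} :
    x ∈ f I ↔ (1:K) ∈ f (x⁻¹ • I ⊓ 1) := by
  have h1 := one_mem_f_one hf
  obtain ⟨hext, hid, hmono, hsmul⟩ := hf
  rw [hst, hsmul, Submodule.mem_inf, mem_smul_iff (inv_ne_zero hx), inv_inv, mul_one]
  exact ⟨fun h => ⟨h, h1⟩, fun h => h.1⟩

lemma mulF (hf : IsSemistarOperation K f) {A B : Submodule R K}
    (hA : (1:K) ∈ f A) (hB : (1:K) ∈ f B) : (1:K) ∈ f (A * B) := by
  obtain ⟨hext, hid, hmono, hsmul⟩ := hf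
  have hAle : A ≤ f (A * B) := by
    intro a haA
    by_cases ha0 : a = 0
    · exact ha0 ▸ (f (A * B)).zero_mem
    · have h1 : a • B ≤ A * B := by
        intro w hw
        rw [← SetLike.mem_coe, Submodule.coe_pointwise_smul, Set.mem_smul_set] at hw
        obtain ⟨y, hy, rfl⟩ := hw
        exact Submodule.mul_mem_mul haA hy
      have h2 := hmono _ _ h1
      rw [hsmul] at h2
      have ha : a ∈ a • f B := by
        rw [mem_smul_iff ha0, inv_mul_cancel₀ ha0]
        exact hB
      exact h2 ha
  have h3 := hmono _ _ hAle
  rw [hid] at h3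
  exact h3 hA

lemma powF (hf : IsSemistarOperation K f) {A : Submodule R K}
    (hA : (1:K) ∈ f A) : ∀ n : ℕ, (1:K) ∈ f (A ^ n)
  | 0 => by rw [pow_zero]; exact one_mem_f_one hf
  | n+1 => by rw [pow_succ]; exact mulF hf (powF hf hA n) hA

lemma infF (hf : IsSemistarOperation K f) (hst : IsStableOperation K f)
    {ι : Type*} (s : Finset ι) (g : ι → Submodule R K)
    (h : ∀ i ∈ s, (1:K) ∈ f (g i)) : (1:K) ∈ f (s.inf g) := by
  classical
  induction s using Finset.induction_on with
  | empty => simpa [Finset.inf_empty] using one_mem_f_top hf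
  | @insert i s hi ih =>
      rw [Finset.inf_insert, hst, Submodule.mem_inf]
      exact ⟨h i (Finset.mem_insert_self i s), ih fun j hj => h j (Finset.mem_insert_of_mem hj)⟩

end Helpers4
section Helpers5

open Submodule

variable {R K : Type*} [CommRing R] [IsDomain R] [Field K] [Algebra R K] [IsFractionRing R K]
variable {f : Submodule R K → Submodule R K}

lemma le_self_mul_locSub {P : Ideal R} (hP : P.IsPrime) (I : Submodule R K) :
    I ≤ I * locSub K P hP := by
  intro z hz
  simpa using Submodule.mul_mem_mul hz (one_mem_locSub hP)

lemma locSub_pow {P : Ideal R} (hP : P.IsPrime) :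
    ∀ m : ℕ, 1 ≤ m → locSub K P hP ^ m = locSub K P hP := by
  intro m hm
  induction m with
  | zero => omega
  | succ n ih =>
      rcases Nat.eq_or_lt_of_le hm with h | h
      · rw [← h, pow_one]
      · rw [pow_succ, ih (by omega), locSub_mul_self hP]

lemma smul_le_mul_of_mem {A B : Submodule R K} {x : K} (hx : x ∈ A) : x • B ≤ A * B := by
  intro z hz
  rw [← SetLike.mem_coe, Submodule.coe_pointwise_smul, Set.mem_smul_set] at hz
  obtain ⟨b, hb, rfl⟩ := hz
  exact Submodule.mul_mem_mul hx hb

lemma one_mem_idealToK_iff {L : Ideal R} : (1:K) ∈ idealToK K L ↔ L = ⊤ := by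
  constructor
  · intro h
    obtain ⟨c, hc, hc1⟩ := mem_idealToK.mp h
    have hc' : c = 1 := algK_inj (by rw [hc1, map_one])
    exact (Ideal.eq_top_iff_one L).mpr (hc' ▸ hc)
  · rintro rfl
    exact mem_idealToK.mpr ⟨1, trivial, map_one _⟩

lemma primary_contracted {P : Ideal R} (hP : P.IsPrime) {L : Ideal R} (hLprim : L.IsPrimary)
    (hLrad : L.radical = P) :
    idealToK K L * locSub K P hP ⊓ 1 = idealToK K L := by
  apply le_antisymm
  · rintro z hz
    obtain ⟨hz1, hz2⟩ := Submodule.mem_inf.mp hz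
    obtain ⟨u, rfl⟩ := Submodule.mem_one.mp hz2
    obtain ⟨s, hs, hmem⟩ := (mem_mul_locSub hP).mp hz1
    have hmem' : algebraMap R K (s * u) ∈ idealToK K L := by
      rwa [map_mul, ← Algebra.smul_def]
    obtain ⟨c, hcL, hc⟩ := mem_idealToK.mp hmem'
    have hsu : s * u ∈ L := algK_inj hc ▸ hcL
    have hu : u ∈ L := by
      rcases (Ideal.isPrimary_iff.mp hLprim).2 (by rwa [mul_comm] at hsu : u * s ∈ L) with h | h
      · exact h
      · exact absurd (hLrad ▸ h) hs
    exact mem_idealToK.mpr ⟨u, hu, rfl⟩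
  · exact le_inf (le_self_mul_locSub hP _) (idealToK_le_one L)

lemma D1_QSpec (hf : IsSemistarOperation K f) (hst : IsStableOperation K f)
    {P : Ideal R} (hP : P.IsPrime) (hQ : f (idealToK K P) ⊓ 1 = idealToK K P)
    (I : Submodule R K) : f I ≤ I * locSub K P hP := by
  intro t ht
  by_cases ht0 : t = 0
  · exact ht0 ▸ Submodule.zero_mem _
  have h1J : (1:K) ∈ f (t⁻¹ • I ⊓ 1) := (lemA hf hst ht0).mp ht
  have hnle : ¬(t⁻¹ • I ⊓ 1 ≤ idealToK K P) := by
    intro hle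
    have h2 := hf.2.2.1 _ _ hle h1J
    have h3 : (1:K) ∈ f (idealToK K P) ⊓ 1 :=
      Submodule.mem_inf.mpr ⟨h2, Submodule.mem_one.mpr ⟨1, map_one _⟩⟩
    rw [hQ, one_mem_idealToK_iff] at h3
    exact hP.ne_top h3
  rw [SetLike.not_le_iff_exists] at hnle
  obtain ⟨w, hwJ, hwP⟩ := hnle
  obtain ⟨hw1, hw2⟩ := Submodule.mem_inf.mp hwJ
  obtain ⟨s, rfl⟩ := Submodule.mem_one.mp hw2
  have hsP : s ∉ P := fun hc => hwP (mem_idealToK.mpr ⟨s, hc, rfl⟩)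
  have hmem : t * algebraMap R K s ∈ I := by
    have := (mem_smul_iff (inv_ne_zero ht0)).mp hw1
    rwa [inv_inv] at this
  have heq : t = t * algebraMap R K s * (algebraMap R K s)⁻¹ := by
    rw [mul_assoc, mul_inv_cancel₀ (algK_ne_zero (ne_zero_of_notMem hsP)), mul_one]
  rw [heq]
  exact Submodule.mul_mem_mul hmem (inv_mem_locSub hP hsP)

lemma D1_PsSpec (hR : IsPruferDomain (R := R) K)
    (hf : IsSemistarOperation K f) (hst : IsStableOperation K f)
    {P : Ideal R} (hP : P.IsPrime) {L : Ideal R} (hLprim : L.IsPrimary)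
    (hLrad : L.radical = P) (hLcl : f (idealToK K L) ⊓ 1 = idealToK K L)
    (I : Submodule R K) : f I ≤ vOp K P hP I := by
  intro t ht
  rw [vOp, Submodule.mem_div_iff_forall_mul_mem]
  intro y hy
  rw [Submodule.mem_div_iff_forall_mul_mem] at hy
  by_cases ht0 : t = 0
  · rw [ht0, zero_mul]; exact Submodule.zero_mem _
  by_cases hy0 : y = 0
  · rw [hy0, mul_zero]; exact Submodule.zero_mem _
  by_contra hty
  have hty0 : t * y ≠ 0 := mul_ne_zero ht0 hy0
  have hw0 : (t * y)⁻¹ ≠ 0 := inv_ne_zero hty0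
  have hwU : (t * y)⁻¹ ∈ locSub K P hP := by
    rcases valuation_locSub hR hP (t * y) hty0 with h | h
    · exact absurd h hty
    · exact h
  obtain ⟨r, s, hs, hrs⟩ := (mem_locSub hP).mp hwU
  have hsK : algebraMap R K s ≠ 0 := algK_ne_zero (ne_zero_of_notMem hs)
  have hrP : r ∈ P := by
    by_contra hrP
    apply hty
    have heq2 : algebraMap R K r * (t * y) = algebraMap R K s := by
      rw [← hrs, mul_assoc, inv_mul_cancel₀ hty0, mul_one]
    exact (mem_locSub hP).mpr ⟨s, r, hrP, heq2⟩
  obtain ⟨m, hm⟩ := Ideal.mem_radical_iff.mp (hLrad ▸ hrP : r ∈ L.radical)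
  have hm1 : 1 ≤ m := by
    rcases Nat.eq_zero_or_pos m with h | h
    · exfalso
      rw [h, pow_zero] at hm
      have hLtop : L = ⊤ := (Ideal.eq_top_iff_one L).mpr hm
      rw [hLtop] at hLrad
      exact hP.ne_top (by rw [← hLrad]; exact Ideal.radical_eq_top.mpr rfl)
    · exact h
  have hwm : ((t * y)⁻¹) ^ m ∈ idealToK K L * locSub K P hP := by
    have hweq : (t * y)⁻¹ = algebraMap R K r * (algebraMap R K s)⁻¹ := by
      rw [← hrs]
      field_simp
    rw [hweq, mul_pow, ← map_pow, inv_pow, ← map_pow]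
    exact Submodule.mul_mem_mul (mem_idealToK.mpr ⟨r ^ m, hm, rfl⟩)
      (inv_mem_locSub hP (fun hc => hs (hP.mem_of_pow_mem m hc)))
  have h1J : (1:K) ∈ f (t⁻¹ • I ⊓ 1) := (lemA hf hst ht0).mp ht
  have hJtle : t⁻¹ • I ⊓ 1 ≤ (t * y)⁻¹ • locSub K P hP := by
    intro u hu
    obtain ⟨hu1, hu2⟩ := Submodule.mem_inf.mp hu
    rw [mem_smul_iff hw0, inv_inv]
    have htu : t * u ∈ I := by
      have := (mem_smul_iff (inv_ne_zero ht0)).mp hu1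
      rwa [inv_inv] at this
    have e : t * y * u = y * (t * u) := by ring
    rw [e]
    exact hy (t * u) (le_self_mul_locSub hP I htu)
  have hJtm : (t⁻¹ • I ⊓ 1) ^ m ≤ idealToK K L * locSub K P hP := by
    calc (t⁻¹ • I ⊓ 1) ^ m ≤ ((t * y)⁻¹ • locSub K P hP) ^ m := pow_le_pow_left' hJtle m
    _ = ((t * y)⁻¹) ^ m • locSub K P hP ^ m := by rw [smul_pow]
    _ = ((t * y)⁻¹) ^ m • locSub K P hP := by rw [locSub_pow hP m hm1]
    _ ≤ (idealToK K L * locSub K P hP) * locSub K P hP := smul_le_mul_of_mem hwm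
    _ = idealToK K L * locSub K P hP := by rw [mul_assoc, locSub_mul_self hP]
  have hJm1 : (t⁻¹ • I ⊓ 1) ^ m ≤ 1 := by
    calc (t⁻¹ • I ⊓ 1) ^ m ≤ 1 ^ m := pow_le_pow_left' inf_le_right m
    _ = 1 := one_pow m
  have hle : (t⁻¹ • I ⊓ 1) ^ m ≤ idealToK K L := by
    rw [← primary_contracted (K := K) hP hLprim hLrad]
    exact le_inf hJtm hJm1
  have hmem1 : (1:K) ∈ f (idealToK K L) := hf.2.2.1 _ _ hle (powF hf h1J m)
  have hmem2 : (1:K) ∈ f (idealToK K L) ⊓ 1 :=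
    Submodule.mem_inf.mpr ⟨hmem1, Submodule.mem_one.mpr ⟨1, map_one _⟩⟩
  rw [hLcl, one_mem_idealToK_iff] at hmem2
  rw [hmem2] at hLrad
  exact hP.ne_top (by rw [← hLrad]; exact Ideal.radical_eq_top.mpr rfl)

end Helpers5
section Helpers6

open Submodule

variable {R K : Type*} [CommRing R] [IsDomain R] [Field K] [Algebra R K] [IsFractionRing R K]

lemma mul_mem_locSub {P : Ideal R} (hP : P.IsPrime) {x y : K}
    (hx : x ∈ locSub K P hP) (hy : y ∈ locSub K P hP) : x * y ∈ locSub K P hP := by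
  have := Submodule.mul_mem_mul hx hy
  rwa [locSub_mul_self hP] at this

/-- The submodule of nonunits of the valuation ring `R_P`. -/
lemma exists_nonunit_submodule {P : Ideal R} (hP : P.IsPrime)
    (hval : ∀ z : K, z ≠ 0 → z ∈ locSub K P hP ∨ z⁻¹ ∈ locSub K P hP) :
    ∃ m : Submodule R K,
      ∀ k : K, k ∈ m ↔ k ∈ locSub K P hP ∧ (k = 0 ∨ k⁻¹ ∉ locSub K P hP) := by
  refine ⟨{
    carrier := {k | k ∈ locSub K P hP ∧ (k = 0 ∨ k⁻¹ ∉ locSub K P hP)},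
    add_mem' := ?_,
    zero_mem' := ⟨Submodule.zero_mem _, Or.inl rfl⟩,
    smul_mem' := ?_ }, fun k => Iff.rfl⟩
  · rintro k1 k2 ⟨hk1U, hk1⟩ ⟨hk2U, hk2⟩
    refine ⟨Submodule.add_mem _ hk1U hk2U, ?_⟩
    by_cases hsum : k1 + k2 = 0
    · exact Or.inl hsum
    rcases hk1 with h10 | h1n
    · right
      rw [h10, zero_add]
      rcases hk2 with h20 | h2n
      · exact absurd (by rw [h10, h20, add_zero]) hsum
      · exact h2n
    rcases hk2 with h20 | h2n
    · right
      rw [h20, add_zero]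
      exact h1n
    have hk10 : k1 ≠ 0 := fun h => h1n (by rw [h, inv_zero]; exact Submodule.zero_mem _)
    have hk20 : k2 ≠ 0 := fun h => h2n (by rw [h, inv_zero]; exact Submodule.zero_mem _)
    right
    intro hinv
    rcases hval (k1 / k2) (div_ne_zero hk10 hk20) with h | h
    · apply h2n
      have e : k2⁻¹ = (k1 + k2)⁻¹ * (1 + k1 / k2) := by
        field_simp <;> ring
      rw [e]
      exact mul_mem_locSub hP hinv
        (Submodule.add_mem _ (one_mem_locSub hP) h)
    · apply h1n
      rw [inv_div] at h
      have e : k1⁻¹ = (k1 + k2)⁻¹ * (1 + k2 / k1) := by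
        field_simp <;> ring
      rw [e]
      exact mul_mem_locSub hP hinv
        (Submodule.add_mem _ (one_mem_locSub hP) h)
  · rintro r k ⟨hkU, hk⟩
    have hrU : algebraMap R K r * k ∈ locSub K P hP :=
      mul_mem_locSub hP (algebraMap_mem_locSub hP r) hkU
    refine ⟨by rwa [Algebra.smul_def], ?_⟩
    by_cases h0 : r • k = 0
    · exact Or.inl h0
    rcases hk with hk0 | hkn
    · exact absurd (by rw [hk0, smul_zero]) h0
    right
    intro hinv
    apply hkn
    have hr0 : algebraMap R K r ≠ 0 := by
      intro h
      exact h0 (by rw [Algebra.smul_def, h, zero_mul])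
    have hk0 : k ≠ 0 := fun h => h0 (by rw [h, smul_zero])
    have e : k⁻¹ = algebraMap R K r * (r • k)⁻¹ := by
      rw [Algebra.smul_def]
      field_simp
    rw [e]
    exact mul_mem_locSub hP (algebraMap_mem_locSub hP r) hinv

lemma idem_prime {P : Ideal R} (hP : P.IsPrime)
    (hval : ∀ z : K, z ≠ 0 → z ∈ locSub K P hP ∨ z⁻¹ ∈ locSub K P hP)
    {D : Submodule R K} (hDU : D * locSub K P hP ≤ D)
    (hidem : D ≤ D * D) (h1D : (1 : K) ∉ D) :
    ∀ a b : K, a * b ∈ D → a ∈ D ∨ b ∈ D := by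
  obtain ⟨m, hm⟩ := exists_nonunit_submodule hP hval
  intro a b hab
  by_contra hcon
  push_neg at hcon
  obtain ⟨haD, hbD⟩ := hcon
  have ha0 : a ≠ 0 := fun h => haD (h ▸ D.zero_mem)
  have hb0 : b ≠ 0 := fun h => hbD (h ▸ D.zero_mem)
  have key : ∀ c : K, c ≠ 0 → c ∉ D → D ≤ c • m := by
    intro c hc0 hcD d hd
    by_cases hd0 : d = 0
    · exact hd0 ▸ Submodule.zero_mem _
    rw [mem_smul_iff hc0]
    have hcd : c⁻¹ * d ∈ locSub K P hP := by
      rcases hval (c⁻¹ * d) (mul_ne_zero (inv_ne_zero hc0) hd0) with h | h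
      · exact h
      · exfalso
        apply hcD
        have e : c = d * (c⁻¹ * d)⁻¹ := by
          field_simp
        rw [e]
        have := Submodule.mul_mem_mul hd h
        exact hDU this
    refine (hm _).mpr ⟨hcd, Or.inr ?_⟩
    intro hinv
    apply hcD
    have e : c = d * (c⁻¹ * d)⁻¹ := by field_simp
    rw [e]
    exact hDU (Submodule.mul_mem_mul hd hinv)
  have hmm : m * m ≤ m := by
    refine Submodule.mul_le.mpr fun k1 hk1 k2 hk2 => ?_
    obtain ⟨hk1U, hk1n⟩ := (hm k1).mp hk1
    obtain ⟨hk2U, hk2n⟩ := (hm k2).mp hk2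
    refine (hm _).mpr ⟨mul_mem_locSub hP hk1U hk2U, ?_⟩
    rcases hk1n with h | h
    · exact Or.inl (by rw [h, zero_mul])
    rcases hk2n with h2 | h2
    · exact Or.inl (by rw [h2, mul_zero])
    right
    intro hinv
    apply h
    have hk20 : k2 ≠ 0 := fun hh => h2 (by rw [hh, inv_zero]; exact Submodule.zero_mem _)
    have hk10 : k1 ≠ 0 := fun hh => h (by rw [hh, inv_zero]; exact Submodule.zero_mem _)
    have e : k1⁻¹ = k2 * (k1 * k2)⁻¹ := by field_simp <;> ring
    rw [e]
    exact mul_mem_locSub hP hk2U hinv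
  have hsub : D * D ≤ (a * b) • m := by
    calc D * D ≤ (a • m) * (b • m) :=
          mul_le_mul' (key a ha0 haD) (key b hb0 hbD)
    _ = (a * b) • (m * m) := by
          rw [smul_mul_assoc, mul_smul_comm, ← mul_smul]
    _ ≤ (a * b) • m := by
          intro z hz
          rw [mem_smul_iff (mul_ne_zero ha0 hb0)] at hz ⊢
          exact hmm hz
  have h1m : (1 : K) ∈ m := by
    have := hsub (hidem hab)
    rwa [mem_smul_iff (mul_ne_zero ha0 hb0), inv_mul_cancel₀ (mul_ne_zero ha0 hb0)] at this
  obtain ⟨-, h⟩ := (hm 1).mp h1m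
  rcases h with h | h
  · exact one_ne_zero h
  · exact h (by rw [inv_one]; exact one_mem_locSub hP)

end Helpers6
section Helpers7

open Submodule

variable {R K : Type*} [CommRing R] [IsDomain R] [Field K] [Algebra R K] [IsFractionRing R K]
variable {f : Submodule R K → Submodule R K}

lemma mem_of_forall_local {C : Submodule R K} (z : K)
    (h : ∀ (M : Ideal R), (hM : M.IsMaximal) → z ∈ C * locSub K M hM.isPrime) : z ∈ C := by
  set E : Ideal R := Submodule.comap (LinearMap.toSpanSingleton R K z) C with hE
  have hEtop : E = ⊤ := by
    by_contra hne
    obtain ⟨M, hM, hle⟩ := Ideal.exists_le_maximal E hne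
    obtain ⟨s, hs, hsz⟩ := (mem_mul_locSub hM.isPrime).mp (h M hM)
    exact hs (hle (by simpa [hE, Submodule.mem_comap, LinearMap.toSpanSingleton_apply] using hsz))
  have h1 : (1:R) ∈ E := hEtop ▸ trivial
  simpa [hE, Submodule.mem_comap, LinearMap.toSpanSingleton_apply] using h1

lemma exists_bad_maximal (hsemiloc : {M : Ideal R | M.IsMaximal}.Finite)
    (hf : IsSemistarOperation K f) (hst : IsStableOperation K f)
    {C : Submodule R K} (hC : C ≤ 1) (hnF : (1:K) ∉ f C) :
    ∃ (M : Ideal R) (hM : M.IsMaximal), (1:K) ∉ f (C * locSub K M hM.isPrime ⊓ 1) := by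
  by_contra hall
  push_neg at hall
  apply hnF
  classical
  set S := hsemiloc.toFinset with hS
  set g : Ideal R → Submodule R K :=
    fun M => if h : M.IsMaximal then C * locSub K M h.isPrime ⊓ 1 else ⊤ with hg
  have hCg : C = S.inf g := by
    apply le_antisymm
    · refine Finset.le_inf fun M hMS => ?_
      have hM : M.IsMaximal := hsemiloc.mem_toFinset.mp hMS
      simp only [hg]
      rw [dif_pos hM]
      exact le_inf (le_self_mul_locSub hM.isPrime C) hC
    · intro z hz
      apply mem_of_forall_local (C := C) z
      intro M hM
      have hMS : M ∈ S := hsemiloc.mem_toFinset.mpr hM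
      have hle : S.inf g ≤ g M := Finset.inf_le hMS
      have hzg : z ∈ g M := hle hz
      simp only [hg] at hzg
      rw [dif_pos hM] at hzg
      exact (Submodule.mem_inf.mp hzg).1
  rw [hCg]
  refine infF hf hst S g fun M hMS => ?_
  have hM : M.IsMaximal := hsemiloc.mem_toFinset.mp hMS
  simp only [hg]
  rw [dif_pos hM]
  exact hall M hM

end Helpers7
section Helpers8

open Submodule

variable {R K : Type*} [CommRing R] [IsDomain R] [Field K] [Algebra R K] [IsFractionRing R K]
variable {f : Submodule R K → Submodule R K}

lemma D2 (hR : IsPruferDomain (R := R) K) (hsemiloc : {M : Ideal R | M.IsMaximal}.Finite)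
    (hf : IsSemistarOperation K f) (hst : IsStableOperation K f) (I : Submodule R K) :
    normStable K f I ≤ f I := by
  intro t ht
  rw [normStable] at ht
  obtain ⟨ht1, ht2⟩ := Submodule.mem_inf.mp ht
  by_cases ht0 : t = 0
  · exact ht0 ▸ (f I).zero_mem
  rw [lemA hf hst ht0]
  set J0 : Submodule R K := t⁻¹ • I ⊓ 1 with hJ0def
  by_contra hJ0
  obtain ⟨M, hM, hW⟩ := exists_bad_maximal hsemiloc hf hst inf_le_right hJ0
  set V := locSub K M hM.isPrime with hVdef
  set Wsub : Submodule R K := J0 * V ⊓ 1 with hWdef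
  have hexts := hf.1
  have hmono := hf.2.2.1
  have hWle1 : Wsub ≤ 1 := inf_le_right
  set W' : Ideal R := Submodule.comap (Algebra.linearMap R K) Wsub with hW'def
  have hmemW' : ∀ r : R, r ∈ W' ↔ algebraMap R K r ∈ Wsub := fun r => Iff.rfl
  have hJ0W : J0 ≤ Wsub := le_inf (le_self_mul_locSub hM.isPrime J0) inf_le_right
  have hVV : V * V = V := locSub_mul_self hM.isPrime
  have hWin : ∀ z : K, z ∈ J0 * V → z ∈ (1 : Submodule R K) → z ∈ Wsub := by
    intro z h1 h2
    rw [hWdef]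
    exact Submodule.mem_inf.mpr ⟨h1, h2⟩
  have hWV : Wsub * V = J0 * V := by
    apply le_antisymm
    · calc Wsub * V ≤ (J0 * V) * V := mul_le_mul' inf_le_left le_rfl
      _ = J0 * V := by rw [mul_assoc, hVV]
    · exact mul_le_mul' hJ0W le_rfl
  have hone_notW : (1:K) ∉ Wsub := fun h => hW (hexts Wsub h)
  have hJ0mem : ∀ z : K, z ∈ J0 ↔ (t * z ∈ I ∧ z ∈ (1 : Submodule R K)) := by
    intro z
    rw [hJ0def, Submodule.mem_inf, mem_smul_iff (inv_ne_zero ht0), inv_inv]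
  set Pstar : Ideal R := W'.radical with hPdef
  have hP1 : (1:R) ∉ Pstar := by
    intro h
    obtain ⟨n, hn⟩ := Ideal.mem_radical_iff.mp h
    rw [one_pow] at hn
    have h2 := (hmemW' 1).mp hn
    rw [map_one] at h2
    exact hone_notW h2
  have hpow_mem_V : ∀ (k : K), k ∈ V → ∀ n : ℕ, k ^ n ∈ V := by
    intro k hk n
    induction n with
    | zero => rw [pow_zero]; exact one_mem_locSub hM.isPrime
    | succ n ih => rw [pow_succ]; exact mul_mem_locSub hM.isPrime ih hk
  have hPprime : Pstar.IsPrime := by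
    rw [Ideal.isPrime_iff]
    refine ⟨(Ideal.ne_top_iff_one Pstar).mpr hP1, ?_⟩
    intro a b hab
    obtain ⟨n, hn⟩ := Ideal.mem_radical_iff.mp hab
    by_cases ha0 : a = 0
    · exact Or.inl (ha0 ▸ Pstar.zero_mem)
    by_cases hb0 : b = 0
    · exact Or.inr (hb0 ▸ Pstar.zero_mem)
    have haK : algebraMap R K a ≠ 0 := algK_ne_zero ha0
    have hbK : algebraMap R K b ≠ 0 := algK_ne_zero hb0
    rcases valuation_locSub hR hM.isPrime (algebraMap R K a / algebraMap R K b)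
        (div_ne_zero haK hbK) with hk | hk
    · left
      refine Ideal.mem_radical_iff.mpr ⟨2 * n, (hmemW' _).mpr ?_⟩
      have heq : algebraMap R K (a ^ (2 * n))
          = algebraMap R K ((a * b) ^ n) * (algebraMap R K a / algebraMap R K b) ^ n := by
        rw [map_pow, map_pow, map_mul, div_pow]
        rw [eq_comm, ← mul_div_assoc, div_eq_iff (pow_ne_zero n hbK)]
        ring
      refine hWin _ ?_ (Submodule.mem_one.mpr ⟨a ^ (2*n), rfl⟩)
      rw [heq, ← hWV]
      exact Submodule.mul_mem_mul ((hmemW' _).mp hn) (hpow_mem_V _ hk n)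
    · right
      rw [inv_div] at hk
      refine Ideal.mem_radical_iff.mpr ⟨2 * n, (hmemW' _).mpr ?_⟩
      have heq : algebraMap R K (b ^ (2 * n))
          = algebraMap R K ((a * b) ^ n) * (algebraMap R K b / algebraMap R K a) ^ n := by
        rw [map_pow, map_pow, map_mul, div_pow]
        rw [eq_comm, ← mul_div_assoc, div_eq_iff (pow_ne_zero n haK)]
        ring
      refine hWin _ ?_ (Submodule.mem_one.mpr ⟨b ^ (2*n), rfl⟩)
      rw [heq, ← hWV]
      exact Submodule.mul_mem_mul ((hmemW' _).mp hn) (hpow_mem_V _ hk n)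
  have hW'M : W' ≤ M := by
    intro r hr
    by_contra hrM
    apply hone_notW
    have hr0 : r ≠ 0 := fun h => hrM (h ▸ M.zero_mem)
    refine hWin 1 ?_ (Submodule.mem_one.mpr ⟨1, map_one _⟩)
    have h1 : (1:K) = algebraMap R K r * (algebraMap R K r)⁻¹ :=
      (mul_inv_cancel₀ (algK_ne_zero hr0)).symm
    rw [h1, ← hWV]
    exact Submodule.mul_mem_mul ((hmemW' r).mp hr) (inv_mem_locSub hM.isPrime hrM)
  have hPM : Pstar ≤ M := by
    have h2 := Ideal.radical_mono hW'M
    rwa [hM.isPrime.radical] at h2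
  set U := locSub K Pstar hPprime with hUdef
  have hUU : U * U = U := locSub_mul_self hPprime
  have hVU : V ≤ U := locSub_mono hPprime hM hPM
  have hVUm : V * U = U := by
    apply le_antisymm
    · calc V * U ≤ U * U := mul_le_mul' hVU le_rfl
      _ = U := hUU
    · intro u hu
      have h2 := Submodule.mul_mem_mul (one_mem_locSub hM.isPrime) hu
      rwa [one_mul] at h2
  have hW'P : W' ≤ Pstar := Ideal.le_radical
  have hsJ0P : ∀ s : R, algebraMap R K s ∈ J0 → s ∈ Pstar := by
    intro s hs
    exact hW'P ((hmemW' s).mpr (hJ0W hs))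
  by_cases hPF : (1:K) ∈ f (idealToK K Pstar)
  · -- Case B
    have hbsV : ∀ b s : R, b ∈ Pstar → s ∉ Pstar →
        algebraMap R K b * (algebraMap R K s)⁻¹ ∈ V := by
      intro b s hb hs
      by_cases hb0 : b = 0
      · rw [hb0, map_zero, zero_mul]; exact Submodule.zero_mem V
      have hbK : algebraMap R K b ≠ 0 := algK_ne_zero hb0
      have hsK : algebraMap R K s ≠ 0 := algK_ne_zero (ne_zero_of_notMem hs)
      rcases valuation_locSub hR hM.isPrime (algebraMap R K b * (algebraMap R K s)⁻¹)
          (mul_ne_zero hbK (inv_ne_zero hsK)) with h | h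
      · exact h
      exfalso
      rw [mul_inv, inv_inv] at h
      obtain ⟨r', t', ht', he⟩ := (mem_locSub hM.isPrime).mp h
      have heq : t' * s = r' * b := by
        apply algK_inj (K := K)
        rw [map_mul, map_mul]
        field_simp at he
        linear_combination he
      have hts : t' * s ∈ Pstar := heq ▸ Pstar.mul_mem_left r' hb
      rcases hPprime.mem_or_mem hts with h1 | h1
      · exact ht' (hPM h1)
      · exact hs h1
    have keyW : ∀ a b : R, a ∈ Pstar → b ∈ Pstar →
        algebraMap R K a ∈ J0 * U → (a * b : R) ∈ W' := by
      intro a b ha hb haD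
      obtain ⟨s, hs, hsa⟩ := (mem_mul_locSub hPprime).mp haD
      have hsa' : algebraMap R K (s * a) ∈ J0 := by rwa [map_mul, ← Algebra.smul_def]
      have hsK : algebraMap R K s ≠ 0 := algK_ne_zero (ne_zero_of_notMem hs)
      have heq : algebraMap R K (a * b)
          = algebraMap R K (s * a) * (algebraMap R K b * (algebraMap R K s)⁻¹) := by
        rw [map_mul, map_mul]
        field_simp
      refine (hmemW' _).mpr (hWin _ ?_ (Submodule.mem_one.mpr ⟨a*b, rfl⟩))
      rw [heq]
      exact Submodule.mul_mem_mul hsa' (hbsV b s hb hs)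
    have endgame : (∀ a : R, a ∈ Pstar → algebraMap R K a ∈ J0 * U) → False := by
      intro hPD
      apply hW
      refine hmono _ _ ?_ (mulF hf hPF hPF)
      refine Submodule.mul_le.mpr fun x hx y hy => ?_
      obtain ⟨a, ha, rfl⟩ := mem_idealToK.mp hx
      obtain ⟨b, hb, rfl⟩ := mem_idealToK.mp hy
      rw [← map_mul]
      exact (hmemW' _).mp (keyW a b ha hb (hPD a ha))
    set Q1 : Submodule R K := Wsub * U ⊓ 1 with hQ1def
    have hQ1le1 : Q1 ≤ 1 := inf_le_right
    have hWQ1 : Wsub ≤ Q1 := by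
      rw [hQ1def]
      exact le_inf (le_self_mul_locSub hPprime Wsub) hWle1
    have hWU_D : Wsub * U = J0 * U := by
      apply le_antisymm
      · calc Wsub * U ≤ (J0 * V) * U := mul_le_mul' inf_le_left le_rfl
        _ = J0 * U := by rw [mul_assoc, hVUm]
      · exact mul_le_mul' hJ0W le_rfl
    have hQ1U : Q1 * U ≤ J0 * U := by
      calc Q1 * U ≤ (Wsub * U) * U := mul_le_mul' inf_le_left le_rfl
      _ = Wsub * U := by rw [mul_assoc, hUU]
      _ = J0 * U := hWU_D
    have hQv2V : ((Q1 * V) * (Q1 * V)) * V ≤ (Q1 * V) * (Q1 * V) :=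
      le_of_eq (by rw [mul_assoc (Q1*V), mul_assoc Q1 V V, hVV])
    have hWvV : (J0 * V) * V ≤ J0 * V := by
      rw [mul_assoc, hVV]
    rcases submodule_comparable (valuation_locSub hR hM.isPrime) hQv2V hWvV with hc | hc
    · -- β1 : Qv^2 ≤ J0*V  : PsSpec route
      have hQ1mem : ∀ c : R, algebraMap R K c ∈ Q1 ↔ ∃ s, s ∉ Pstar ∧ (s * c : R) ∈ W' := by
        intro c
        rw [hQ1def, Submodule.mem_inf]
        constructor
        · rintro ⟨h1, -⟩
          obtain ⟨s, hs, hsc⟩ := (mem_mul_locSub hPprime).mp h1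
          exact ⟨s, hs, (hmemW' _).mpr (by rwa [map_mul, ← Algebra.smul_def])⟩
        · rintro ⟨s, hs, hsc⟩
          refine ⟨(mem_mul_locSub hPprime).mpr ⟨s, hs, ?_⟩, Submodule.mem_one.mpr ⟨c, rfl⟩⟩
          rw [Algebra.smul_def, ← map_mul]
          exact (hmemW' _).mp hsc
      have hQ1n : (1:K) ∉ f Q1 := by
        intro h1Q1
        apply hW
        refine hmono _ _ ?_ (mulF hf h1Q1 h1Q1)
        rw [hWdef]
        refine le_inf ?_ ?_
        · calc Q1 * Q1 ≤ (Q1*V) * (Q1*V) :=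
                mul_le_mul' (le_self_mul_locSub hM.isPrime Q1) (le_self_mul_locSub hM.isPrime Q1)
          _ ≤ J0 * V := hc
        · calc Q1 * Q1 ≤ 1 * 1 := mul_le_mul' hQ1le1 hQ1le1
          _ = 1 := one_mul 1
      set Q1' : Ideal R := Submodule.comap (Algebra.linearMap R K) Q1 with hQ1'def
      have hQ1K : idealToK K Q1' = Q1 := idealToK_idealOf hQ1le1
      have hmemQ1' : ∀ c : R, c ∈ Q1' ↔ algebraMap R K c ∈ Q1 := fun _ => Iff.rfl
      have hW'Q1' : W' ≤ Q1' := fun c hcW => (hmemQ1' c).mpr (hWQ1 ((hmemW' c).mp hcW))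
      have hQ1ne : Q1' ≠ ⊤ := by
        intro h
        have h1 : (1:R) ∈ Q1' := h ▸ trivial
        obtain ⟨s, hs, hsW⟩ := (hQ1mem 1).mp ((hmemQ1' 1).mp h1)
        rw [mul_one] at hsW
        exact hs (hW'P hsW)
      have hQ1rad : Q1'.radical = Pstar := by
        apply le_antisymm
        · intro c hc'
          obtain ⟨n, hn⟩ := Ideal.mem_radical_iff.mp hc'
          obtain ⟨s, hs, hsW⟩ := (hQ1mem _).mp ((hmemQ1' _).mp hn)
          have h2 : s * c ^ n ∈ Pstar := hW'P hsW
          rcases hPprime.mem_or_mem h2 with h | h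
          · exact absurd h hs
          · exact hPprime.mem_of_pow_mem n h
        · calc Pstar = W'.radical := rfl
          _ ≤ Q1'.radical := Ideal.radical_mono hW'Q1'
      have hQ1primary : Q1'.IsPrimary := by
        rw [Ideal.isPrimary_iff]
        refine ⟨hQ1ne, ?_⟩
        intro x y hxy
        by_cases hyP : y ∈ Pstar
        · exact Or.inr (by rw [hQ1rad]; exact hyP)
        · left
          obtain ⟨s, hs, hsW⟩ := (hQ1mem _).mp ((hmemQ1' _).mp hxy)
          apply (hmemQ1' x).mpr
          apply (hQ1mem x).mpr
          refine ⟨s * y, fun hmem => ?_, ?_⟩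
          · rcases hPprime.mem_or_mem hmem with h | h
            exacts [hs h, hyP h]
          · have e : s * y * x = s * (x * y) := by ring
            rw [e]
            exact hsW
      set Lsub : Submodule R K := f Q1 ⊓ 1 with hLdef
      have hLle1 : Lsub ≤ 1 := inf_le_right
      set L' : Ideal R := Submodule.comap (Algebra.linearMap R K) Lsub with hL'def
      have hLK : idealToK K L' = Lsub := idealToK_idealOf hLle1
      have hmemL' : ∀ c : R, c ∈ L' ↔ algebraMap R K c ∈ f Q1 := by
        intro c
        have h2 : c ∈ L' ↔ algebraMap R K c ∈ Lsub := Iff.rfl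
        rw [h2, hLdef, Submodule.mem_inf]
        exact ⟨fun h => h.1, fun h => ⟨h, Submodule.mem_one.mpr ⟨c, rfl⟩⟩⟩
      have hQ1L : Q1' ≤ L' := fun c hc2 => (hmemL' c).mpr (hexts Q1 ((hmemQ1' c).mp hc2))
      have hLP : L' ≤ Pstar := by
        intro c hc2
        by_contra hcP
        apply hQ1n
        have hc0 : c ≠ 0 := fun h => hcP (h ▸ Pstar.zero_mem)
        have hcK : algebraMap R K c ≠ 0 := algK_ne_zero hc0
        have h1 : (1:K) ∈ f ((algebraMap R K c)⁻¹ • Q1 ⊓ 1) :=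
          (lemA hf hst hcK).mp ((hmemL' c).mp hc2)
        refine hmono _ _ ?_ h1
        intro w hw
        obtain ⟨hw1, hw2⟩ := Submodule.mem_inf.mp hw
        obtain ⟨d, rfl⟩ := Submodule.mem_one.mp hw2
        have hcd : algebraMap R K (c * d) ∈ Q1 := by
          rw [map_mul]
          have h3 := (mem_smul_iff (inv_ne_zero hcK)).mp hw1
          rwa [inv_inv] at h3
        have hcd' : (d * c : R) ∈ Q1' := (hmemQ1' _).mpr (by rwa [mul_comm d c])
        rcases (Ideal.isPrimary_iff.mp hQ1primary).2 hcd' with h | h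
        · exact (hmemQ1' d).mp h
        · exact absurd (by rw [← hQ1rad]; exact h) hcP
      have hLrad : L'.radical = Pstar := by
        apply le_antisymm
        · calc L'.radical ≤ Pstar.radical := Ideal.radical_mono hLP
          _ = Pstar := hPprime.radical
        · calc Pstar = Q1'.radical := hQ1rad.symm
          _ ≤ L'.radical := Ideal.radical_mono hQ1L
      have hLprimary : L'.IsPrimary := by
        rw [Ideal.isPrimary_iff]
        refine ⟨fun h => hPprime.ne_top (top_le_iff.mp (h ▸ hLP)), ?_⟩
        intro x y hxy
        by_cases hyP : y ∈ Pstar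
        · exact Or.inr (by rw [hLrad]; exact hyP)
        left
        by_cases hx0 : x = 0
        · exact hx0 ▸ L'.zero_mem
        have hy0 : y ≠ 0 := fun h => hyP (h ▸ Pstar.zero_mem)
        have hxyK : algebraMap R K (x * y) ≠ 0 := algK_ne_zero (mul_ne_zero hx0 hy0)
        have h1 : (1:K) ∈ f ((algebraMap R K (x*y))⁻¹ • Q1 ⊓ 1) :=
          (lemA hf hst hxyK).mp ((hmemL' _).mp hxy)
        apply (hmemL' x).mpr
        rw [lemA hf hst (algK_ne_zero hx0)]
        refine hmono _ _ ?_ h1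
        intro w hw
        obtain ⟨hw1, hw2⟩ := Submodule.mem_inf.mp hw
        obtain ⟨d, rfl⟩ := Submodule.mem_one.mp hw2
        have hxyd : (x * d * y : R) ∈ Q1' := by
          apply (hmemQ1' _).mpr
          have h3 := (mem_smul_iff (inv_ne_zero hxyK)).mp hw1
          rw [inv_inv, ← map_mul] at h3
          rwa [show x * d * y = x * y * d by ring]
        rcases (Ideal.isPrimary_iff.mp hQ1primary).2 hxyd with h | h
        · refine Submodule.mem_inf.mpr ⟨?_, Submodule.mem_one.mpr ⟨d, rfl⟩⟩
          rw [mem_smul_iff (inv_ne_zero (algK_ne_zero hx0)), inv_inv, ← map_mul]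
          exact (hmemQ1' _).mp h
        · exact absurd (by rw [← hQ1rad]; exact h) hyP
      have hLcl : f Lsub ⊓ 1 = Lsub := by
        rw [hLdef, hst, hf.2.1, inf_assoc, inf_eq_right.mpr (hf.1 1)]
      have hPone : f (idealToK K Pstar) ⊓ 1 = 1 := by
        apply le_antisymm inf_le_right
        refine le_inf ?_ le_rfl
        intro z hz
        obtain ⟨r, rfl⟩ := Submodule.mem_one.mp hz
        rw [Algebra.algebraMap_eq_smul_one]
        exact Submodule.smul_mem _ r hPF
      have hPsmem : Pstar ∈ PsSpec K f :=
        ⟨hPprime, hPone, L', hLprimary, hLrad, by rw [hLK]; exact hLcl⟩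
      have hvop : t ∈ vOp K Pstar hPprime I := Submodule.mem_iInf _ |>.mp ht2 ⟨Pstar, hPsmem⟩
      apply endgame
      intro a haP
      by_cases ha0 : a = 0
      · rw [ha0, map_zero]; exact Submodule.zero_mem _
      by_contra haD
      have haK : algebraMap R K a ≠ 0 := algK_ne_zero ha0
      have hforall : ∀ u, u ∈ I * U → t⁻¹ * u ∈ algebraMap R K a • U := by
        intro u hu
        by_contra hnu
        have hu0 : u ≠ 0 := by
          intro h; exact hnu (by rw [h, mul_zero]; exact Submodule.zero_mem _)
        have hne : u / (t * algebraMap R K a) ≠ 0 := div_ne_zero hu0 (mul_ne_zero ht0 haK)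
        rcases valuation_locSub hR hPprime _ hne with h | h
        · apply hnu
          rw [mem_smul_iff haK]
          have e : (algebraMap R K a)⁻¹ * (t⁻¹ * u) = u / (t * algebraMap R K a) := by
            field_simp
          rw [e]
          exact h
        · apply haD
          rw [inv_div] at h
          have htaIU : t * algebraMap R K a ∈ I * U := by
            have e : t * algebraMap R K a = u * (t * algebraMap R K a / u) := by
              rw [mul_comm u, div_mul_cancel₀ _ hu0]
            rw [e]
            have h4 := Submodule.mul_mem_mul hu h
            rwa [mul_assoc, hUU] at h4
          have haIU : algebraMap R K a ∈ (t⁻¹ • I) * U := by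
            rw [smul_mul_assoc, mem_smul_iff (inv_ne_zero ht0), inv_inv]
            exact htaIU
          obtain ⟨s, hs, hsa⟩ := (mem_mul_locSub hPprime).mp haIU
          have hsaJ0 : algebraMap R K (s * a) ∈ J0 := by
            refine (hJ0mem _).mpr ⟨?_, Submodule.mem_one.mpr ⟨s*a, rfl⟩⟩
            have h2 := hsa
            rw [Algebra.smul_def, mem_smul_iff (inv_ne_zero ht0), inv_inv] at h2
            rwa [map_mul]
          have e : algebraMap R K a = algebraMap R K (s*a) * (algebraMap R K s)⁻¹ := by
            rw [map_mul]
            field_simp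
            rw [div_self (algK_ne_zero (ne_zero_of_notMem hs))]
          rw [e]
          exact Submodule.mul_mem_mul hsaJ0 (inv_mem_locSub hPprime hs)
      have hy : (t * algebraMap R K a)⁻¹ ∈ U / (I * U) := by
        rw [Submodule.mem_div_iff_forall_mul_mem]
        intro u hu
        have h2 := hforall u hu
        rw [mem_smul_iff haK] at h2
        have e : (t * algebraMap R K a)⁻¹ * u = (algebraMap R K a)⁻¹ * (t⁻¹ * u) := by
          rw [mul_inv]
          try ring
        rw [e]
        exact h2
      have htyU : t * (t * algebraMap R K a)⁻¹ ∈ U := by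
        rw [vOp] at hvop
        exact (Submodule.mem_div_iff_forall_mul_mem.mp hvop) _ hy
      have hainv : (algebraMap R K a)⁻¹ ∈ U := by
        have e : (algebraMap R K a)⁻¹ = t * (t * algebraMap R K a)⁻¹ := by
          rw [mul_inv, ← mul_assoc, mul_inv_cancel₀ ht0, one_mul]
        rw [e]
        exact htyU
      obtain ⟨r, s, hs, he⟩ := (mem_locSub hPprime).mp hainv
      have heq : s = r * a := by
        apply algK_inj (K := K)
        rw [map_mul]
        field_simp at he
        linear_combination he
      exact hs (heq ▸ Pstar.mul_mem_left r haP)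
    · -- β2 : J0*V ≤ Qv^2 : idempotent route
      have hDU : (J0 * U) * U ≤ J0 * U := by rw [mul_assoc, hUU]
      have hDidem : J0 * U ≤ (J0 * U) * (J0 * U) := by
        have hQ1UD : Q1 * U = J0 * U := by
          apply le_antisymm hQ1U
          exact mul_le_mul' (le_trans hJ0W hWQ1) le_rfl
        calc J0 * U = (J0 * V) * U := by rw [mul_assoc, hVUm]
        _ ≤ ((Q1*V)*(Q1*V)) * U := mul_le_mul' hc le_rfl
        _ = (Q1 * Q1) * (V * (V * U)) := by ring
        _ = (Q1 * Q1) * U := by rw [hVUm, hVUm]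
        _ = (Q1 * U) * (Q1 * U) := by
              rw [show (Q1*U)*(Q1*U) = (Q1*Q1)*(U*U) by ring, hUU]
        _ = (J0 * U) * (J0 * U) := by rw [hQ1UD]
      have h1D : (1:K) ∉ J0 * U := by
        intro h1
        obtain ⟨s, hs, hsJ⟩ := (mem_mul_locSub hPprime).mp h1
        have h2 : algebraMap R K s ∈ J0 := by rwa [Algebra.smul_def, mul_one] at hsJ
        exact hs (hsJ0P s h2)
      have hDprime := idem_prime hPprime (valuation_locSub hR hPprime) hDU hDidem h1D
      apply endgame
      intro a haP
      obtain ⟨n, hn⟩ := Ideal.mem_radical_iff.mp haP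
      have hWD : Wsub ≤ J0 * U := by
        calc Wsub ≤ Wsub * U := le_self_mul_locSub hPprime Wsub
        _ = J0 * U := hWU_D
      have hpow : algebraMap R K a ^ n ∈ J0 * U := by
        rw [← map_pow]
        exact hWD ((hmemW' _).mp hn)
      rcases Nat.eq_zero_or_pos n with h0 | hpos
      · exfalso
        rw [h0, pow_zero] at hn
        apply hone_notW
        have h2 := (hmemW' 1).mp hn
        rwa [map_one] at h2
      have hind : ∀ (nn : ℕ), 1 ≤ nn → ∀ k : K, k ^ nn ∈ J0 * U → k ∈ J0 * U := by
        intro nn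
        induction nn with
        | zero => omega
        | succ p ih =>
            intro _ k hk
            rcases Nat.eq_zero_or_pos p with hp | hp
            · rwa [hp, pow_one] at hk
            · rw [pow_succ] at hk
              rcases hDprime _ _ hk with h | h
              · exact ih hp k h
              · exact h
      exact hind n hpos _ hpow
  · -- Case A : QSpec route
    have hQmem : Pstar ∈ QSpec K f := by
      refine ⟨hPprime, le_antisymm ?_ (le_inf (hexts _) (idealToK_le_one _))⟩
      intro z hz
      obtain ⟨hz1, hz2⟩ := Submodule.mem_inf.mp hz
      obtain ⟨u, rfl⟩ := Submodule.mem_one.mp hz2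
      by_cases hu0 : u = 0
      · rw [hu0, map_zero]; exact Submodule.zero_mem _
      by_cases huP : u ∈ Pstar
      · exact mem_idealToK.mpr ⟨u, huP, rfl⟩
      exfalso
      apply hPF
      have hz0 : algebraMap R K u ≠ 0 := algK_ne_zero hu0
      have h1 : (1:K) ∈ f ((algebraMap R K u)⁻¹ • idealToK K Pstar ⊓ 1) :=
        (lemA hf hst hz0).mp hz1
      refine hmono _ _ ?_ h1
      intro w hw
      obtain ⟨hw1, hw2⟩ := Submodule.mem_inf.mp hw
      obtain ⟨c, rfl⟩ := Submodule.mem_one.mp hw2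
      have h2 : algebraMap R K (u * c) ∈ idealToK K Pstar := by
        rw [map_mul]
        have h3 := (mem_smul_iff (inv_ne_zero hz0)).mp hw1
        rwa [inv_inv] at h3
      obtain ⟨d, hd, hdc⟩ := mem_idealToK.mp h2
      have h4 : u * c ∈ Pstar := algK_inj hdc ▸ hd
      exact mem_idealToK.mpr ⟨c, (hPprime.mem_or_mem h4).resolve_left huP, rfl⟩
    have htP : t ∈ I * locSub K Pstar hPprime := Submodule.mem_iInf _ |>.mp ht1 ⟨Pstar, hQmem⟩
    obtain ⟨s, hs, hst'⟩ := (mem_mul_locSub hPprime).mp htP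
    apply hs
    apply hsJ0P s
    refine (hJ0mem _).mpr ⟨?_, Submodule.mem_one.mpr ⟨s, rfl⟩⟩
    rw [mul_comm, ← Algebra.smul_def]
    exact hst'

end Helpers8
/-- Let `R` be a semilocal Prüfer domain. Then every stable semistar operation on `R` equals
its normalized stable version. -/
theorem star_eq_normStable_of_semilocal {R K : Type*} [CommRing R] [IsDomain R] [Field K] [Algebra R K]
    [IsFractionRing R K]
    (hR : IsPruferDomain (R := R) K)
    (hsemiloc : {M : Ideal R | M.IsMaximal}.Finite)
    (f : Submodule R K → Submodule R K) (hf : IsSemistarOperation K f)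
    (hstable : IsStableOperation K f) :
    ∀ I : Submodule R K, f I = normStable K f I := by
  intro I
  apply le_antisymm
  · rw [normStable]
    refine le_inf (le_iInf ?_) (le_iInf ?_)
    · rintro ⟨P, hP, hQ⟩
      exact D1_QSpec hf hstable hP hQ I
    · rintro ⟨P, hP, hPF, L, hLp, hLr, hLc⟩
      exact D1_PsSpec hR hf hstable hP hLp hLr hLc I
  · exact D2 hR hsemiloc hf hstable I
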